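/- For every positive integer p and every natural number n with n ≥ p + 1, the cardinality of S^p_n satisfies |S^p_n| = |S^p_{n−1}| + |S^p_{n−(p+1)}|. -/

import Mathlib

/-- `S p n` is the collection of finite nonempty sets `F ⊆ ℕ` with
`min F ≥ p * |F|` and `max F = n`. -/
def S (p n : ℕ) : Set (Finset ℕ) :=
  {F | ∃ h : F.Nonempty, F.min' h ≥ p * F.card ∧ F.max' h = n}

/-!
Split `S^p_n` according to whether `n - 1 ∈ F`. If `n - 1 ∉ F`, replacing the maximum `n` by
`n - 1` keeps the cardinality and the lower bound `p * |F|`, giving a bijection onto `S^p_{n-1}`.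
If `n - 1 ∈ F`, then `|F| ≥ 2`; dropping `n` and shifting the remaining elements down by `p`
lowers both `min F` and `p * |F|` by `p`, giving a bijection onto `S^p_{n-(p+1)}`.
-/

open Finset

theorem mem_S_iff {p n : ℕ} {F : Finset ℕ} :
    F ∈ S p n ↔ n ∈ F ∧ (∀ x ∈ F, x ≤ n) ∧ ∀ x ∈ F, p * #F ≤ x := by
  constructor
  · rintro ⟨hne, hmin, rfl⟩
    exact ⟨F.max'_mem hne, fun x hx => F.le_max' x hx, fun x hx => hmin.trans (F.min'_le x hx)⟩
  · rintro ⟨hn, hle, hge⟩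
    exact ⟨⟨n, hn⟩, hge _ (F.min'_mem _), le_antisymm (F.max'_le _ _ hle) (F.le_max' n hn)⟩

theorem S_finite (p n : ℕ) : (S p n).Finite :=
  (range (n + 1)).powerset.finite_toSet.subset fun _ hF => mem_coe.2 <| mem_powerset.2
    fun x hx => mem_range.2 (Nat.lt_succ_of_le ((mem_S_iff.1 hF).2.1 x hx))

theorem notMem_of_mem_S {p m k : ℕ} {F : Finset ℕ} (hF : F ∈ S p m) (hk : m < k) : k ∉ F :=
  fun h => ((mem_S_iff.1 hF).2.1 k h).not_gt hk

theorem le_of_mem_S {p n x : ℕ} {F : Finset ℕ} (hF : F ∈ S p n) (hx : x ∈ F) : p ≤ x :=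
  (Nat.le_mul_of_pos_right p (card_pos.2 ⟨x, hx⟩)).trans ((mem_S_iff.1 hF).2.2 x hx)

theorem notMem_image_add_of_mem_S {p m k : ℕ} {G : Finset ℕ} (hG : G ∈ S p m) (hk : m + p < k) :
    k ∉ G.image (· + p) := by
  rw [mem_image]
  rintro ⟨y, hy, rfl⟩
  exact notMem_of_mem_S hG (by omega) hy

theorem insert_erase_insert_erase {α : Type*} [DecidableEq α] {a b : α} {s : Finset α}
    (ha : a ∈ s) (hb : b ∉ s) : insert a ((insert b (s.erase a)).erase b) = s := by
  rw [erase_insert fun h => hb (mem_of_mem_erase h), insert_erase ha]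

theorem image_add_image_sub {p : ℕ} {s : Finset ℕ} (h : ∀ x ∈ s, p ≤ x) :
    (s.image (· - p)).image (· + p) = s := by
  rw [image_image]
  exact (image_congr fun x hx => Nat.sub_add_cancel (h x hx)).trans image_id

theorem image_sub_image_add (p : ℕ) (s : Finset ℕ) : (s.image (· + p)).image (· - p) = s := by
  simp [image_image, Function.comp_def]

section

variable {p n : ℕ}

theorem insert_pred_erase_mem_S (hn : p + 1 ≤ n) {F : Finset ℕ} (hF : F ∈ S p n)
    (hF' : n - 1 ∉ F) : insert (n - 1) (F.erase n) ∈ S p (n - 1) := by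
  obtain ⟨hnF, hle, hge⟩ := mem_S_iff.1 hF
  have hcard : #(insert (n - 1) (F.erase n)) = #F := by
    rw [card_insert_of_notMem fun h => hF' (mem_of_mem_erase h), card_erase_add_one hnF]
  have hpred : p * #F ≤ n - 1 := by
    obtain hempty | ⟨y, hy⟩ := (F.erase n).eq_empty_or_nonempty
    · have hone : #F = 1 := by rw [← card_erase_add_one hnF, hempty, card_empty]
      rw [hone]
      omega
    · have := hle y (mem_of_mem_erase hy)
      have := hge y (mem_of_mem_erase hy)
      have := ne_of_mem_erase hy
      omega
  rw [mem_S_iff, hcard]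
  refine ⟨mem_insert_self _ _, ?_, ?_⟩ <;> intro x hx <;> rw [mem_insert, mem_erase] at hx
  · rcases hx with rfl | ⟨hxn, hxF⟩
    · rfl
    · have := hle x hxF
      omega
  · rcases hx with rfl | ⟨-, hxF⟩
    · exact hpred
    · exact hge x hxF

theorem insert_erase_pred_mem_S (hn : n ≠ 0) {G : Finset ℕ} (hG : G ∈ S p (n - 1)) :
    insert n (G.erase (n - 1)) ∈ S p n := by
  obtain ⟨hmG, hle, hge⟩ := mem_S_iff.1 hG
  have hcard : #(insert n (G.erase (n - 1))) = #G := by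
    rw [card_insert_of_notMem fun h => notMem_of_mem_S hG (by omega) (mem_of_mem_erase h),
      card_erase_add_one hmG]
  rw [mem_S_iff, hcard]
  refine ⟨mem_insert_self _ _, ?_, ?_⟩ <;> intro x hx <;> rw [mem_insert, mem_erase] at hx
  · rcases hx with rfl | ⟨-, hxG⟩
    · rfl
    · have := hle x hxG
      omega
  · rcases hx with rfl | ⟨-, hxG⟩
    · have := hge _ hmG
      omega
    · exact hge x hxG

theorem bijOn_replaceMax (hn : p + 1 ≤ n) :
    Set.BijOn (fun F => insert (n - 1) (F.erase n)) (S p n \ {F | n - 1 ∈ F}) (S p (n - 1)) := by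
  have hn1 : n - 1 < n := by omega
  refine Set.InvOn.bijOn (f' := fun G => insert n (G.erase (n - 1))) ⟨?_, ?_⟩ ?_ ?_
  · rintro F ⟨hF, hF'⟩
    exact insert_erase_insert_erase (mem_S_iff.1 hF).1 hF'
  · intro G hG
    exact insert_erase_insert_erase (mem_S_iff.1 hG).1 (notMem_of_mem_S hG hn1)
  · rintro F ⟨hF, hF'⟩
    exact insert_pred_erase_mem_S hn hF hF'
  · intro G hG
    refine ⟨insert_erase_pred_mem_S (by omega) hG, ?_⟩
    simp [hn1.ne]

theorem image_sub_erase_mem_S (hn : n ≠ 0) {F : Finset ℕ} (hF : F ∈ S p n) (hF' : n - 1 ∈ F) :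
    (F.erase n).image (· - p) ∈ S p (n - (p + 1)) := by
  obtain ⟨hnF, hle, hge⟩ := mem_S_iff.1 hF
  have hinj : Set.InjOn (· - p) (F.erase n) := fun x hx y hy hxy => by
    have := le_of_mem_S hF (mem_of_mem_erase hx)
    have := le_of_mem_S hF (mem_of_mem_erase hy)
    simp only at hxy
    omega
  rw [mem_S_iff, card_image_of_injOn hinj, card_erase_of_mem hnF, Nat.mul_sub_one]
  refine ⟨mem_image.2 ⟨n - 1, mem_erase.2 ⟨by omega, hF'⟩, by omega⟩, ?_, ?_⟩ <;>
    intro y hy <;> obtain ⟨x, hx, rfl⟩ := mem_image.1 hy <;> rw [mem_erase] at hx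
  · have := hle x hx.2
    omega
  · have := hge x hx.2
    omega

theorem insert_image_add_mem_S (hn : p + 1 ≤ n) {G : Finset ℕ} (hG : G ∈ S p (n - (p + 1))) :
    insert n (G.image (· + p)) ∈ S p n := by
  obtain ⟨hmG, hle, hge⟩ := mem_S_iff.1 hG
  have hcard : #(insert n (G.image (· + p))) = #G + 1 := by
    rw [card_insert_of_notMem (notMem_image_add_of_mem_S hG (by omega)),
      card_image_of_injective _ (add_left_injective p)]
  rw [mem_S_iff, hcard, Nat.mul_succ]
  refine ⟨mem_insert_self _ _, ?_, ?_⟩ <;> intro x hx <;> rw [mem_insert, mem_image] at hx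
  · rcases hx with rfl | ⟨y, hy, rfl⟩
    · rfl
    · have := hle y hy
      omega
  · rcases hx with rfl | ⟨y, hy, rfl⟩
    · have := hge _ hmG
      omega
    · have := hge y hy
      omega

theorem bijOn_shiftDown (hn : p + 1 ≤ n) :
    Set.BijOn (fun F => (F.erase n).image (· - p)) (S p n ∩ {F | n - 1 ∈ F})
      (S p (n - (p + 1))) := by
  refine Set.InvOn.bijOn (f' := fun G => insert n (G.image (· + p))) ⟨?_, ?_⟩ ?_ ?_
  · rintro F ⟨hF, -⟩
    dsimp only
    rw [image_add_image_sub fun x hx => le_of_mem_S hF (mem_of_mem_erase hx),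
      insert_erase (mem_S_iff.1 hF).1]
  · intro G hG
    dsimp only
    rw [erase_insert (notMem_image_add_of_mem_S hG (by omega)), image_sub_image_add]
  · rintro F ⟨hF, hF'⟩
    exact image_sub_erase_mem_S (by omega) hF hF'
  · intro G hG
    refine ⟨insert_image_add_mem_S hn hG, mem_insert_of_mem (mem_image.2 ?_)⟩
    exact ⟨n - (p + 1), (mem_S_iff.1 hG).1, by omega⟩

end

theorem stmt_1_general (p : ℕ) (n : ℕ) (hn : n ≥ p + 1) :
    (S p n).ncard = (S p (n - 1)).ncard + (S p (n - (p + 1))).ncard := by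
  rw [← Set.ncard_inter_add_ncard_sdiff_eq_ncard (S p n) {F | n - 1 ∈ F} (S_finite p n),
    (bijOn_shiftDown hn).ncard_eq, (bijOn_replaceMax hn).ncard_eq, add_comm]

theorem stmt_1 (p : ℕ) (hp : 0 < p) (n : ℕ) (hn : n ≥ p + 1) :
    (S p n).ncard = (S p (n - 1)).ncard + (S p (n - (p + 1))).ncard :=
  stmt_1_general p n hn
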